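/- Suppose φ : 𝔻 → 𝔻 is holomorphic with φ(0) = 0, and define S(z) = 2φ'(z)/(1 - zφ(z))². Then (1-|z|²)²|S(z)| ≤ 2 for all z ∈ 𝔻. -/

import Mathlib

/-!
By the Schwarz–Pick lemma, `|φ'(z)| (1 - |z|²) ≤ 1 - |φ(z)|²`, obtained by applying the Schwarz
lemma to `φ` conjugated by the disk automorphisms exchanging `0` with `z` and with `φ(z)`. Hence
`(1 - |z|²)² |φ'(z)| ≤ (1 - |z|²)(1 - |φ(z)|²) ≤ (1 - |z||φ(z)|)² ≤ |1 - zφ(z)|²`, the middle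
inequality being `(|z| - |φ(z)|)² ≥ 0`.
-/

open Metric ComplexConjugate Set

lemma one_sub_sq_norm_pos {z : ℂ} (hz : ‖z‖ < 1) : 0 < 1 - ‖z‖ ^ 2 :=
  sub_pos.2 (pow_lt_one₀ (norm_nonneg z) hz two_ne_zero)

noncomputable def mobiusSwap (a w : ℂ) : ℂ := (a - w) / (1 - conj a * w)

lemma mobiusSwap_zero (a : ℂ) : mobiusSwap a 0 = a := by simp [mobiusSwap]

lemma mobiusSwap_self (a : ℂ) : mobiusSwap a a = 0 := by simp [mobiusSwap]

lemma sq_norm_one_sub_conj_mul_sub_sq_norm_sub (a w : ℂ) :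
    ‖1 - conj a * w‖ ^ 2 - ‖a - w‖ ^ 2 = (1 - ‖a‖ ^ 2) * (1 - ‖w‖ ^ 2) := by
  simp only [Complex.sq_norm, Complex.normSq_apply, Complex.sub_re, Complex.sub_im,
    Complex.mul_re, Complex.mul_im, Complex.one_re, Complex.one_im, Complex.conj_re,
    Complex.conj_im]
  ring

lemma one_sub_conj_mul_ne_zero {a w : ℂ} (ha : ‖a‖ < 1) (hw : ‖w‖ < 1) :
    1 - conj a * w ≠ 0 := by
  have : ‖conj a * w‖ < 1 := by
    rw [norm_mul, Complex.norm_conj]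
    exact mul_lt_one_of_nonneg_of_lt_one_left (norm_nonneg a) ha hw.le
  rw [sub_ne_zero]
  intro h
  simp [← h] at this

lemma mapsTo_mobiusSwap {a : ℂ} (ha : ‖a‖ < 1) :
    MapsTo (mobiusSwap a) (ball 0 1) (ball 0 1) := by
  intro w hw
  rw [mem_ball_zero_iff] at hw ⊢
  have hpos := mul_pos (one_sub_sq_norm_pos ha) (one_sub_sq_norm_pos hw)
  have hlt : ‖a - w‖ < ‖1 - conj a * w‖ := by
    have := sq_norm_one_sub_conj_mul_sub_sq_norm_sub a w
    exact (pow_lt_pow_iff_left₀ (norm_nonneg _) (norm_nonneg _) two_ne_zero).1 (by linarith)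
  rw [mobiusSwap, norm_div]
  exact (div_lt_one ((norm_nonneg _).trans_lt hlt)).2 hlt

lemma hasDerivAt_mobiusSwap {a w : ℂ} (h : 1 - conj a * w ≠ 0) :
    HasDerivAt (mobiusSwap a) ((‖a‖ ^ 2 - 1) / (1 - conj a * w) ^ 2) w := by
  have hnum : HasDerivAt (fun x : ℂ => a - x) (-1) w := (hasDerivAt_id w).const_sub a
  have hden : HasDerivAt (fun x : ℂ => 1 - conj a * x) (-conj a) w := by
    simpa using ((hasDerivAt_id w).const_mul (conj a)).const_sub 1
  refine (hnum.div hden h).congr_deriv ?_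
  rw [← Complex.conj_mul']
  ring

lemma differentiableOn_mobiusSwap {a : ℂ} (ha : ‖a‖ < 1) :
    DifferentiableOn ℂ (mobiusSwap a) (ball 0 1) := fun _ hw =>
  (hasDerivAt_mobiusSwap (one_sub_conj_mul_ne_zero ha (mem_ball_zero_iff.1 hw))).differentiableAt
    |>.differentiableWithinAt

lemma hasDerivAt_mobiusSwap_zero (a : ℂ) :
    HasDerivAt (mobiusSwap a) (-(1 - ‖a‖ ^ 2 : ℂ)) 0 := by
  convert hasDerivAt_mobiusSwap (a := a) (w := 0) (by simp) using 1
  simp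

lemma hasDerivAt_mobiusSwap_self {a : ℂ} (ha : ‖a‖ < 1) :
    HasDerivAt (mobiusSwap a) (-(1 - ‖a‖ ^ 2 : ℂ)⁻¹) a := by
  have h := one_sub_conj_mul_ne_zero ha ha
  convert hasDerivAt_mobiusSwap h using 1
  rw [Complex.conj_mul'] at h ⊢
  field_simp
  ring

theorem norm_deriv_mul_le_of_mapsTo_ball {φ : ℂ → ℂ}
    (hd : DifferentiableOn ℂ φ (ball 0 1)) (hmaps : MapsTo φ (ball 0 1) (ball 0 1))
    {z : ℂ} (hz : ‖z‖ < 1) :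
    ‖deriv φ z‖ * (1 - ‖z‖ ^ 2) ≤ 1 - ‖φ z‖ ^ 2 := by
  have hφz : ‖φ z‖ < 1 := mem_ball_zero_iff.1 (hmaps (mem_ball_zero_iff.2 hz))
  set F := mobiusSwap (φ z) ∘ φ ∘ mobiusSwap z
  have hF : HasDerivAt F
      (-(1 - ‖φ z‖ ^ 2 : ℂ)⁻¹ * (deriv φ z * -(1 - ‖z‖ ^ 2 : ℂ))) 0 := by
    have hφ : HasDerivAt φ (deriv φ z) (mobiusSwap z 0) := by
      rw [mobiusSwap_zero]
      exact (hd.differentiableAt (isOpen_ball.mem_nhds (mem_ball_zero_iff.2 hz))).hasDerivAt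
    have hm : HasDerivAt (mobiusSwap (φ z)) (-(1 - ‖φ z‖ ^ 2 : ℂ)⁻¹) (φ (mobiusSwap z 0)) := by
      rw [mobiusSwap_zero]
      exact hasDerivAt_mobiusSwap_self hφz
    exact hm.comp 0 (hφ.comp 0 (hasDerivAt_mobiusSwap_zero z))
  have hFmaps : MapsTo F (ball 0 1) (ball 0 1) :=
    (mapsTo_mobiusSwap hφz).comp (hmaps.comp (mapsTo_mobiusSwap hz))
  have hFd : DifferentiableOn ℂ F (ball 0 1) :=
    (differentiableOn_mobiusSwap hφz).comp (hd.comp (differentiableOn_mobiusSwap hz)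
      (mapsTo_mobiusSwap hz)) (hmaps.comp (mapsTo_mobiusSwap hz))
  have hF0 : F 0 = 0 := by simp [F, mobiusSwap_zero, mobiusSwap_self]
  have hschwarz : ‖deriv F 0‖ ≤ 1 :=
    Complex.norm_deriv_le_one_of_mapsTo_ball hFd
      (by rw [hF0]; exact hFmaps.mono_right ball_subset_closedBall) one_pos
  have h1 := one_sub_sq_norm_pos hφz
  have h2 := (one_sub_sq_norm_pos hz).le
  rw [hF.deriv, norm_mul, norm_neg, norm_inv, norm_mul, norm_neg] at hschwarz
  norm_cast at hschwarz
  rw [Real.norm_of_nonneg h1.le, Real.norm_of_nonneg h2, inv_mul_le_iff₀ h1, mul_one] at hschwarz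
  exact hschwarz

lemma one_sub_sq_norm_mul_one_sub_sq_norm_le {𝕜 : Type*} [NormedDivisionRing 𝕜] (z w : 𝕜) :
    (1 - ‖z‖ ^ 2) * (1 - ‖w‖ ^ 2) ≤ ‖1 - z * w‖ ^ 2 := by
  have h := abs_norm_sub_norm_le 1 (z * w)
  rw [norm_one, norm_mul] at h
  calc (1 - ‖z‖ ^ 2) * (1 - ‖w‖ ^ 2) ≤ (1 - ‖z‖ * ‖w‖) ^ 2 := by
        nlinarith [sq_nonneg (‖z‖ - ‖w‖)]
    _ = |1 - ‖z‖ * ‖w‖| ^ 2 := (sq_abs _).symm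
    _ ≤ ‖1 - z * w‖ ^ 2 := pow_le_pow_left₀ (abs_nonneg _) h 2

theorem stmt15_general (φ : ℂ → ℂ)
    (hd : DifferentiableOn ℂ φ (ball (0 : ℂ) 1))
    (hmaps : Set.MapsTo φ (ball (0 : ℂ) 1) (ball (0 : ℂ) 1)) :
    ∀ z ∈ ball (0 : ℂ) 1,
      (1 - ‖z‖ ^ 2) ^ 2 *
          ‖2 * deriv φ z / (1 - z * φ z) ^ 2‖ ≤ 2 := by
  intro z hz
  rw [mem_ball_zero_iff] at hz
  have hz2 := (one_sub_sq_norm_pos hz).le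
  calc (1 - ‖z‖ ^ 2) ^ 2 * ‖2 * deriv φ z / (1 - z * φ z) ^ 2‖
      = 2 * ((1 - ‖z‖ ^ 2) * (‖deriv φ z‖ * (1 - ‖z‖ ^ 2))) / ‖1 - z * φ z‖ ^ 2 := by
        rw [norm_div, norm_mul, norm_pow, Complex.norm_two]
        ring
    _ ≤ 2 * ((1 - ‖z‖ ^ 2) * (1 - ‖φ z‖ ^ 2)) / ‖1 - z * φ z‖ ^ 2 := by
        gcongr
        exact norm_deriv_mul_le_of_mapsTo_ball hd hmaps hz
    _ ≤ 2 := div_le_of_le_mul₀ (by positivity) zero_le_two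
        (by linarith [one_sub_sq_norm_mul_one_sub_sq_norm_le z (φ z)])

theorem stmt15 (φ : ℂ → ℂ)
    (hd : DifferentiableOn ℂ φ (ball (0 : ℂ) 1))
    (hmaps : Set.MapsTo φ (ball (0 : ℂ) 1) (ball (0 : ℂ) 1))
    (h0 : φ 0 = 0) :
    ∀ z ∈ ball (0 : ℂ) 1,
      (1 - ‖z‖ ^ 2) ^ 2 *
          ‖2 * deriv φ z / (1 - z * φ z) ^ 2‖ ≤ 2 :=
  stmt15_general φ hd hmaps
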